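/- arXiv:math/0703564 — 2 statements merged into one kernel-verified Lean document; each statement's English description precedes it below -/
import Mathlib

section
/- There is no function u : ℝ³ → ℝ with 0 ≤ u ≤ 1, u(0) = 1, that is twice continuously differentiable and satisfies Δu = u⁵ on all of ℝ³ (where Δ is the Euclidean Laplacian). -/
/-! At a maximum point the Laplacian of a C² function is nonpositive (each pure second
derivative is, by restricting to a coordinate line), whereas `Δu = u⁵` forces `Δu(0) = 1`
at the maximum point `0` of `u`. -/

/-- Euclidean Laplacian on ℝ³: sum of second partial derivatives. -/
noncomputable def eucLap (u : (Fin 3 → ℝ) → ℝ) (y : Fin 3 → ℝ) : ℝ :=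
  ∑ i : Fin 3, fderiv ℝ (fun z => fderiv ℝ u z (Pi.single i 1)) y (Pi.single i 1)

open Filter Topology

/- If `f''(a) > 0`, the second derivative test makes `a` also a local minimum, so `f` is
locally constant at `a` and `f''(a) = 0`. -/
theorem IsLocalMax.deriv_deriv_nonpos {f : ℝ → ℝ} {a : ℝ} (h : IsLocalMax f a)
    (hc : ContinuousAt f a) : deriv (deriv f) a ≤ 0 := by
  by_contra! hpos
  have hmin : IsLocalMin f a := isLocalMin_of_deriv_deriv_pos hpos h.deriv_eq_zero hc
  have hconst : f =ᶠ[𝓝 a] fun _ => f a := by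
    filter_upwards [h, hmin] with x hmax hmin using le_antisymm hmax hmin
  have : deriv (deriv f) a = 0 := by
    rw [hconst.deriv.deriv_eq]
    simp
  exact hpos.ne' this

section Directional

variable {E : Type*} [NormedAddCommGroup E] [NormedSpace ℝ E]

theorem deriv_comp_add_smul {u : E → ℝ} {a v : E} {t : ℝ}
    (hu : DifferentiableAt ℝ u (a + t • v)) :
    deriv (fun s : ℝ => u (a + s • v)) t = fderiv ℝ u (a + t • v) v := by
  have hline : HasDerivAt (fun s : ℝ => a + s • v) v t := by
    simpa using ((hasDerivAt_id t).smul_const v).const_add a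
  exact (hu.hasFDerivAt.comp_hasDerivAt t hline).deriv

theorem IsLocalMax.fderiv_fderiv_apply_nonpos {u : E → ℝ} {a : E} (h : IsLocalMax u a)
    (hu : Differentiable ℝ u) (hu' : DifferentiableAt ℝ (fderiv ℝ u) a) (v : E) :
    fderiv ℝ (fun z => fderiv ℝ u z v) a v ≤ 0 := by
  have hmax : IsLocalMax (fun s : ℝ => u (a + s • v)) 0 := by
    have h0 : IsLocalMax u (a + (0 : ℝ) • v) := by simpa using h
    exact h0.comp_continuous (g := fun s : ℝ => a + s • v) (b := 0) (by fun_prop)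
  have hd : deriv (fun s : ℝ => u (a + s • v)) = fun s => fderiv ℝ u (a + s • v) v :=
    funext fun _ => deriv_comp_add_smul (hu _)
  have hd2 : deriv (fun s : ℝ => fderiv ℝ u (a + s • v) v) 0 =
      fderiv ℝ (fun z => fderiv ℝ u z v) a v := by
    simpa using deriv_comp_add_smul (u := fun z => fderiv ℝ u z v) (t := 0)
      (by simpa using hu'.clm_apply (differentiableAt_const v))
  have := hmax.deriv_deriv_nonpos (hu.continuous.comp (by fun_prop)).continuousAt
  rwa [hd, hd2] at this

end Directional

theorem eucLap_nonpos_of_isLocalMax {u : (Fin 3 → ℝ) → ℝ} {a : Fin 3 → ℝ}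
    (h : IsLocalMax u a) (hu : ContDiff ℝ 2 u) : eucLap u a ≤ 0 :=
  Finset.sum_nonpos fun _ _ => h.fderiv_fderiv_apply_nonpos (hu.differentiable two_ne_zero)
    ((hu.fderiv_right (m := 1) le_rfl).differentiable one_ne_zero a) _

/-- There is no C² function `u : ℝ³ → ℝ` with `0 ≤ u ≤ 1`, `u 0 = 1`,
satisfying `Δu = u⁵` on all of ℝ³. -/
theorem stmt_0 :
    ¬ ∃ u : (Fin 3 → ℝ) → ℝ,
      ContDiff ℝ 2 u ∧
      (∀ y, 0 ≤ u y ∧ u y ≤ 1) ∧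
      u 0 = 1 ∧
      (∀ y, eucLap u y = (u y) ^ 5) := by
  rintro ⟨u, hu, hbound, hu0, hlap⟩
  have hmax : IsLocalMax u 0 := Eventually.of_forall fun y => hu0 ▸ (hbound y).2
  have : eucLap u 0 = 1 := by rw [hlap, hu0, one_pow]
  linarith [eucLap_nonpos_of_isLocalMax hmax hu]
end

section
/- Let (M, λ) be a compact Riemannian 3-manifold and let φ : M → ℝ be a positive C² solution of Δφ = (1/8)Rφ − (1/8)σ²φ⁻⁷ + (1/12)τ²φ⁵, where R is a continuous function bounded in absolute value, σ² : M → ℝ is continuous with C₁⁻¹ < σ² < C₁, and τ² is a constant with C₂⁻¹ < τ² < C₂, for constants C₁, C₂ > 0. Then there is a constant ε > 0 depending only on C₁, C₂, and sup|R| such that φ ≥ ε^{1/4} on M. -/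
/-- Lower bound for positive solutions of the Lichnerowicz equation
`Δφ = (1/8)Rφ − (1/8)σ²φ⁻⁷ + (1/12)τ²φ⁵` on a compact manifold.
The Laplace–Beltrami operator is represented abstractly by an operator `Δ`
satisfying the minimum principle `Δ f p ≥ 0` at a global minimum point `p`
(which holds for the Laplace–Beltrami operator of any Riemannian metric on a
compact manifold).  The constant `ε > 0` depends only on `C₁`, `C₂` and the
bound `R₀` on `|R|`. -/
theorem stmt_6 (C₁ C₂ R₀ : ℝ) (hC₁ : 0 < C₁) (hC₂ : 0 < C₂) :
    ∃ ε > 0, ∀ (M : Type) [TopologicalSpace M] [CompactSpace M] [Nonempty M]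
      (Δ : (M → ℝ) → M → ℝ),
      (∀ (f : M → ℝ) (p : M), IsMinOn f Set.univ p → 0 ≤ Δ f p) →
      ∀ (R σ2 : M → ℝ) (τ2 : ℝ) (φ : M → ℝ),
      Continuous R → (∀ p, |R p| ≤ R₀) →
      Continuous σ2 → (∀ p, C₁⁻¹ < σ2 p ∧ σ2 p < C₁) →
      C₂⁻¹ < τ2 → τ2 < C₂ →
      Continuous φ → (∀ p, 0 < φ p) →
      (∀ p, Δ φ p = (1 / 8) * R p * φ p - (1 / 8) * σ2 p * ((φ p) ^ 7)⁻¹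
        + (1 / 12) * τ2 * (φ p) ^ 5) →
      ∀ p, ε ^ ((1 : ℝ) / 4) ≤ φ p := by
  set K : ℝ := (1/8) * max R₀ 0 + (1/12) * C₂ with hKdef
  have hK : 0 < K := by positivity
  set m : ℝ := min 1 (C₁⁻¹ / (16 * K)) with hmdef
  have hm : 0 < m := by
    apply lt_min one_pos
    positivity
  have hm1 : m ≤ 1 := min_le_left _ _
  have hKm : K * m ≤ C₁⁻¹ / 16 := by
    have : m ≤ C₁⁻¹ / (16 * K) := min_le_right _ _
    calc K * m ≤ K * (C₁⁻¹ / (16 * K)) := by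
          exact mul_le_mul_of_nonneg_left this hK.le
      _ = C₁⁻¹ / 16 := by field_simp
  refine ⟨m ^ 4, by positivity, ?_⟩
  intro M _ _ _ Δ hmin R σ2 τ2 φ hR hRb hσc hσ hτ1 hτ2 hφc hφpos heq p
  have hroot : ((m ^ 4 : ℝ)) ^ ((1 : ℝ) / 4) = m := by
    rw [← Real.rpow_natCast m 4, ← Real.rpow_mul hm.le]
    norm_num
  rw [hroot]
  obtain ⟨q, -, hq⟩ := isCompact_univ.exists_isMinOn (Set.univ_nonempty)
    hφc.continuousOn
  have hle : φ q ≤ φ p := hq (Set.mem_univ p)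
  by_contra hcon
  push_neg at hcon
  have hxm : φ q < m := lt_of_le_of_lt hle hcon
  set x : ℝ := φ q with hxdef
  have hx : 0 < x := hφpos q
  have hx1 : x ≤ 1 := le_of_lt (lt_of_lt_of_le hxm hm1)
  have h0 : 0 ≤ (1/8) * R q * x - (1/8) * σ2 q * (x ^ 7)⁻¹
      + (1/12) * τ2 * x ^ 5 := by
    have := hmin φ q hq
    rw [heq q] at this
    linarith
  have key : ((1/8) * R q * x - (1/8) * σ2 q * (x ^ 7)⁻¹ + (1/12) * τ2 * x ^ 5) * x ^ 7
      = (1/8) * R q * x ^ 8 - (1/8) * σ2 q + (1/12) * τ2 * x ^ 12 := by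
    field_simp
  have h1 : 0 ≤ (1/8) * R q * x ^ 8 - (1/8) * σ2 q + (1/12) * τ2 * x ^ 12 := by
    rw [← key]
    exact mul_nonneg h0 (pow_pos hx 7).le
  have hRq : R q ≤ max R₀ 0 := le_trans (le_trans (le_abs_self _) (hRb q)) (le_max_left _ _)
  have hR0' : (0:ℝ) ≤ max R₀ 0 := le_max_right _ _
  have hσq : C₁⁻¹ < σ2 q := (hσ q).1
  have hτpos : 0 < τ2 := lt_trans (inv_pos.mpr hC₂) hτ1
  have hx8 : x ^ 8 ≤ x := by
    calc x ^ 8 ≤ x ^ 1 := pow_le_pow_of_le_one hx.le hx1 (by norm_num)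
      _ = x := pow_one x
  have hx12 : x ^ 12 ≤ x := by
    calc x ^ 12 ≤ x ^ 1 := pow_le_pow_of_le_one hx.le hx1 (by norm_num)
      _ = x := pow_one x
  have e1 : R q * x ^ 8 ≤ max R₀ 0 * x := by
    calc R q * x ^ 8 ≤ max R₀ 0 * x ^ 8 :=
          mul_le_mul_of_nonneg_right hRq (pow_nonneg hx.le 8)
      _ ≤ max R₀ 0 * x := mul_le_mul_of_nonneg_left hx8 hR0'
  have e2 : τ2 * x ^ 12 ≤ C₂ * x := by
    calc τ2 * x ^ 12 ≤ C₂ * x ^ 12 :=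
          mul_le_mul_of_nonneg_right hτ2.le (pow_nonneg hx.le 12)
      _ ≤ C₂ * x := mul_le_mul_of_nonneg_left hx12 hC₂.le
  have e3 : K * x < K * m := mul_lt_mul_of_pos_left hxm hK
  have hC₁inv : 0 < C₁⁻¹ := inv_pos.mpr hC₁
  nlinarith [h1, e1, e2, e3, hKm, hσq]
end
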